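/- Fix a policy π in a finite-horizon MDP with rewards in [0,1] and horizon H. Then the law of total variance yields Σ_{h=1}^H E_{π,h}[Var_{P_h}(V^π_{h+1})(s_h,a_h)] = Var_π(Σ_{h=1}^H r_h) − Σ_{h=1}^H E_{π,h}[Var(r_h | s_h,a_h)] ≤ Var_π(Σ_{h=1}^H r_h) ≤ H². In particular Σ_{h=1}^H E_{π,h}[Var_{P_h}(V^π_{h+1})] ≤ H². -/
import Mathlib


open Finset

variable {S A Ωr : Type*}

/-- Probability of a trajectory `τ = ((s_1, ω_1), …, (s_H, ω_H))` (state and reward-noise at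
each of the `H` steps) under the deterministic policy `π`, transition kernel `P` and
reward-noise distributions `q`, starting from `s₀` at step 1. -/
noncomputable def trajProb [Fintype S] [Fintype A] [Fintype Ωr] [DecidableEq S]
    (H : ℕ) (hH : 0 < H) (P : ℕ → S → A → S → ℝ) (π : ℕ → S → A)
    (q : ℕ → S → A → Ωr → ℝ) (s₀ : S) (τ : Fin H → S × Ωr) : ℝ :=
  (if (τ ⟨0, hH⟩).1 = s₀ then 1 else 0) *
    ∏ i : Fin H,
      (q (i.1 + 1) (τ i).1 (π (i.1 + 1) (τ i).1) (τ i).2 *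
        if h : i.1 + 1 < H then
          P (i.1 + 1) (τ i).1 (π (i.1 + 1) (τ i).1) (τ ⟨i.1 + 1, h⟩).1
        else 1)

/-- `dVal P rbar π n h s`: value of the deterministic policy `π` over the next `n` steps
starting at step `h` in state `s`, with mean rewards `rbar`.  The value function at step `h`
in a horizon-`H` MDP is `V^π_h = dVal P rbar π (H + 1 - h) h`. -/
noncomputable def dVal [Fintype S]
    (P : ℕ → S → A → S → ℝ) (rbar : ℕ → S → A → ℝ) (π : ℕ → S → A) :
    ℕ → ℕ → S → ℝ
  | 0, _, _ => 0
  | n + 1, h, s =>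
      rbar h s (π h s) + ∑ s' : S, P h s (π h s) s' * dVal P rbar π n (h + 1) s'

section Aux

variable [Fintype S] [Fintype A] [Fintype Ωr] [DecidableEq S]
variable (P : ℕ → S → A → S → ℝ) (π : ℕ → S → A) (q : ℕ → S → A → Ωr → ℝ)

/-- Recursive expectation operator. -/
noncomputable def EE : (n : ℕ) → ℕ → S → ((Fin n → S × Ωr) → ℝ) → ℝ
  | 0, _, _, F => F Fin.elim0
  | n + 1, h, s, F =>
      ∑ ω : Ωr, ∑ s' : S, q h s (π h s) ω * P h s (π h s) s' *
        EE n (h + 1) s' (fun τ => F (Fin.cons (s, ω) τ))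

lemma EE_zero (h : ℕ) (s : S) (F : (Fin 0 → S × Ωr) → ℝ) :
    EE P π q 0 h s F = F Fin.elim0 := rfl

lemma EE_succ (n h : ℕ) (s : S) (F : (Fin (n+1) → S × Ωr) → ℝ) :
    EE P π q (n+1) h s F = ∑ ω : Ωr, ∑ s' : S, q h s (π h s) ω * P h s (π h s) s' *
      EE P π q n (h + 1) s' (fun τ => F (Fin.cons (s, ω) τ)) := rfl

/-- Trajectory probability, generalized. -/
noncomputable def TP (n : ℕ) (h : ℕ) (s : S) (τ : Fin n → S × Ωr) : ℝ :=
  (if hn : 0 < n then (if (τ ⟨0, hn⟩).1 = s then 1 else 0) else 1) *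
    ∏ i : Fin n,
      (q (i.1 + h) (τ i).1 (π (i.1 + h) (τ i).1) (τ i).2 *
        if hi : i.1 + 1 < n then
          P (i.1 + h) (τ i).1 (π (i.1 + h) (τ i).1) (τ ⟨i.1 + 1, hi⟩).1
        else 1)

lemma TP_cons (hPsum : ∀ h s a, ∑ s' : S, P h s a s' = 1)
    (n h : ℕ) (s : S) (x : S × Ωr) (τ' : Fin n → S × Ωr) :
    TP P π q (n + 1) h s (Fin.cons x τ') =
    (if x.1 = s then 1 else 0) * (q h x.1 (π h x.1) x.2 *
      ∑ s' : S, P h x.1 (π h x.1) s' * TP P π q n (h + 1) s' τ') := by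
  have hprod : ∀ m (g : Fin m → S × Ωr),
      (∏ i : Fin m, (q (i.1 + 1 + h) (g i).1 (π (i.1 + 1 + h) (g i).1) (g i).2 *
        if hi : i.1 + 1 + 1 < m + 1 then
          P (i.1 + 1 + h) (g i).1 (π (i.1 + 1 + h) (g i).1)
            ((Fin.cons x g : Fin (m+1) → S × Ωr) ⟨i.1 + 1 + 1, hi⟩).1
        else 1)) =
      ∏ i : Fin m, (q (i.1 + (h+1)) (g i).1 (π (i.1 + (h+1)) (g i).1) (g i).2 *
        if hi : i.1 + 1 < m then
          P (i.1 + (h+1)) (g i).1 (π (i.1 + (h+1)) (g i).1) (g ⟨i.1 + 1, hi⟩).1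
        else 1) := by
    intro m g
    refine Finset.prod_congr rfl fun i _ => ?_
    have e1 : i.1 + 1 + h = i.1 + (h + 1) := by omega
    by_cases hc : i.1 + 1 < m
    · have hc' : i.1 + 1 + 1 < m + 1 := by omega
      rw [dif_pos hc, dif_pos hc']
      have : (⟨i.1 + 1 + 1, hc'⟩ : Fin (m+1)) = Fin.succ ⟨i.1 + 1, hc⟩ := rfl
      rw [this, Fin.cons_succ, e1]
    · have hc' : ¬ (i.1 + 1 + 1 < m + 1) := by omega
      rw [dif_neg hc, dif_neg hc', e1]
  cases n with
  | zero =>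
    have h1 : TP P π q 1 h s (Fin.cons x τ') =
        (if x.1 = s then 1 else 0) * q h x.1 (π h x.1) x.2 := by
      simp [TP, Fin.prod_univ_succ]
    have h0 : ∀ s' : S, TP P π q 0 (h+1) s' τ' = 1 := by
      intro s'; simp [TP]
    rw [h1]
    simp only [h0, mul_one, hPsum]
  | succ m =>
    rw [TP]
    rw [Fin.prod_univ_succ]
    simp only [Fin.cons_zero, Fin.cons_succ, Fin.val_zero, Nat.zero_add, Fin.val_succ]
    rw [dif_pos (show 0 < m + 1 + 1 by omega), dif_pos (show 1 < m + 1 + 1 by omega)]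
    simp only [Fin.mk_zero, Fin.mk_one, Fin.cons_zero, ← Fin.succ_zero_eq_one, Fin.cons_succ]
    rw [hprod (m+1) τ']
    have hsum : (∑ s' : S, P h x.1 (π h x.1) s' * TP P π q (m+1) (h+1) s' τ') =
        P h x.1 (π h x.1) (τ' 0).1 *
        ∏ i : Fin (m+1), (q (i.1 + (h+1)) (τ' i).1 (π (i.1 + (h+1)) (τ' i).1) (τ' i).2 *
          if hi : i.1 + 1 < m + 1 then
            P (i.1 + (h+1)) (τ' i).1 (π (i.1 + (h+1)) (τ' i).1) (τ' ⟨i.1 + 1, hi⟩).1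
          else 1) := by
      have key : ∀ s' : S, P h x.1 (π h x.1) s' * TP P π q (m+1) (h+1) s' τ' =
          (if (τ' 0).1 = s' then P h x.1 (π h x.1) s' *
            ∏ i : Fin (m+1), (q (i.1 + (h+1)) (τ' i).1 (π (i.1 + (h+1)) (τ' i).1) (τ' i).2 *
              if hi : i.1 + 1 < m + 1 then
                P (i.1 + (h+1)) (τ' i).1 (π (i.1 + (h+1)) (τ' i).1) (τ' ⟨i.1 + 1, hi⟩).1
              else 1) else 0) := by
        intro s'
        rw [TP, dif_pos (show 0 < m + 1 by omega)]
        simp only [Fin.mk_zero]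
        by_cases hc : (τ' 0).1 = s' <;> simp [hc]
      rw [Finset.sum_congr rfl fun s' _ => key s']
      rw [Finset.sum_ite_eq]
      simp
    rw [hsum]
    ring



lemma TP_exp (hPsum : ∀ h s a, ∑ s' : S, P h s a s' = 1) :
    ∀ (n h : ℕ) (s : S) (F : (Fin n → S × Ωr) → ℝ),
    ∑ τ : Fin n → S × Ωr, TP P π q n h s τ * F τ = EE P π q n h s F := by
  intro n
  induction n with
  | zero =>
    intro h s F
    rw [Fintype.sum_unique]
    have h1 : TP P π q 0 h s default = 1 := by simp [TP]
    have h2 : (default : Fin 0 → S × Ωr) = Fin.elim0 := Subsingleton.elim _ _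
    rw [h1, h2, one_mul]
    rfl
  | succ n ih =>
    intro h s F
    rw [EE_succ]
    rw [← Equiv.sum_comp (Fin.consEquiv (fun _ : Fin (n+1) => S × Ωr))
          (fun τ => TP P π q (n+1) h s τ * F τ)]
    rw [Fintype.sum_prod_type]
    simp only [show ∀ p : (S × Ωr) × (Fin n → S × Ωr),
        (Fin.consEquiv fun _ : Fin (n+1) => (S × Ωr)) p = Fin.cons p.1 p.2 from fun _ => rfl]
    rw [Fintype.sum_prod_type]
    have hterm : ∀ (s₁ : S) (ω : Ωr) (τ' : Fin n → S × Ωr),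
        TP P π q (n+1) h s (Fin.cons (s₁, ω) τ') * F (Fin.cons (s₁, ω) τ') =
        (if s₁ = s then 1 else 0) * (q h s₁ (π h s₁) ω *
          ∑ s' : S, P h s₁ (π h s₁) s' * TP P π q n (h+1) s' τ') * F (Fin.cons (s₁, ω) τ') := by
      intro s₁ ω τ'
      rw [TP_cons P π q hPsum]
    simp only [hterm]
    rw [Finset.sum_eq_single s]
    · simp only [eq_self_iff_true, if_true, one_mul]
      refine Finset.sum_congr rfl fun ω _ => ?_
      calc ∑ τ' : Fin n → S × Ωr, q h s (π h s) ω *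
              (∑ s' : S, P h s (π h s) s' * TP P π q n (h+1) s' τ') * F (Fin.cons (s, ω) τ')
          = ∑ τ' : Fin n → S × Ωr, ∑ s' : S, q h s (π h s) ω * P h s (π h s) s' *
              (TP P π q n (h+1) s' τ' * F (Fin.cons (s, ω) τ')) := by
            refine Finset.sum_congr rfl fun τ' _ => ?_
            rw [Finset.mul_sum, Finset.sum_mul]
            exact Finset.sum_congr rfl fun s' _ => by ring
        _ = ∑ s' : S, ∑ τ' : Fin n → S × Ωr, q h s (π h s) ω * P h s (π h s) s' *
              (TP P π q n (h+1) s' τ' * F (Fin.cons (s, ω) τ')) := Finset.sum_comm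
        _ = ∑ s' : S, q h s (π h s) ω * P h s (π h s) s' *
              EE P π q n (h+1) s' (fun τ => F (Fin.cons (s, ω) τ)) := by
            refine Finset.sum_congr rfl fun s' _ => ?_
            rw [← Finset.mul_sum, ih (h+1) s' (fun τ => F (Fin.cons (s, ω) τ))]
    · intro s₁ _ hne
      simp [hne]
    · intro habs
      exact absurd (Finset.mem_univ s) habs

lemma qP_split (hPsum : ∀ h s a, ∑ s' : S, P h s a s' = 1)
    (hqsum : ∀ h s a, ∑ ω : Ωr, q h s a ω = 1) (h : ℕ) (s : S)
    (f1 f2 : Ωr → ℝ) (g2 g3 : S → ℝ) :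
    ∑ ω : Ωr, ∑ s' : S, q h s (π h s) ω * P h s (π h s) s' *
        (f1 ω + f2 ω * g2 s' + g3 s') =
      (∑ ω : Ωr, q h s (π h s) ω * f1 ω) +
        (∑ ω : Ωr, q h s (π h s) ω * f2 ω) * (∑ s' : S, P h s (π h s) s' * g2 s') +
        ∑ s' : S, P h s (π h s) s' * g3 s' := by
  have hω : ∀ ω : Ωr, ∑ s' : S, q h s (π h s) ω * P h s (π h s) s' *
      (f1 ω + f2 ω * g2 s' + g3 s') =
      q h s (π h s) ω * f1 ω + (q h s (π h s) ω * f2 ω) *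
        (∑ s' : S, P h s (π h s) s' * g2 s') +
        q h s (π h s) ω * ∑ s' : S, P h s (π h s) s' * g3 s' := by
    intro ω
    have : ∀ s' : S, q h s (π h s) ω * P h s (π h s) s' * (f1 ω + f2 ω * g2 s' + g3 s') =
        (q h s (π h s) ω * f1 ω) * P h s (π h s) s' +
          ((q h s (π h s) ω * f2 ω) * (P h s (π h s) s' * g2 s') +
            q h s (π h s) ω * (P h s (π h s) s' * g3 s')) := fun s' => by ring
    rw [Finset.sum_congr rfl fun s' _ => this s']
    simp only [Finset.sum_add_distrib]
    rw [← Finset.mul_sum, ← Finset.mul_sum, ← Finset.mul_sum, hPsum, mul_one]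
    ring
  rw [Finset.sum_congr rfl fun ω _ => hω ω]
  rw [Finset.sum_add_distrib, Finset.sum_add_distrib, ← Finset.sum_mul, ← Finset.sum_mul,
    hqsum, one_mul]

variable {P q π} in
lemma EE_const (hPsum : ∀ h s a, ∑ s' : S, P h s a s' = 1)
    (hqsum : ∀ h s a, ∑ ω : Ωr, q h s a ω = 1) :
    ∀ (n h : ℕ) (s : S) (c : ℝ), EE P π q n h s (fun _ => c) = c := by
  intro n
  induction n with
  | zero => intro h s c; rfl
  | succ n ih =>
    intro h s c
    rw [EE_succ]
    simp only [ih]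
    have := qP_split P π q hPsum hqsum h s (fun _ => c) (fun _ => 0) (fun _ => 0) (fun _ => 0)
    simp only [mul_zero, zero_mul, add_zero, mul_one, Finset.sum_const_zero] at this
    calc ∑ ω : Ωr, ∑ s' : S, q h s (π h s) ω * P h s (π h s) s' * c
        = ∑ ω : Ωr, q h s (π h s) ω * c := this
      _ = (∑ ω : Ωr, q h s (π h s) ω) * c := by rw [Finset.sum_mul]
      _ = c := by rw [hqsum, one_mul]

variable {P q π} in
lemma EE_add : ∀ (n h : ℕ) (s : S) (F G : (Fin n → S × Ωr) → ℝ),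
    EE P π q n h s (fun τ => F τ + G τ) = EE P π q n h s F + EE P π q n h s G := by
  intro n
  induction n with
  | zero => intro h s F G; rfl
  | succ n ih =>
    intro h s F G
    rw [EE_succ, EE_succ, EE_succ]
    rw [← Finset.sum_add_distrib]
    refine Finset.sum_congr rfl fun ω _ => ?_
    rw [← Finset.sum_add_distrib]
    refine Finset.sum_congr rfl fun s' _ => ?_
    rw [ih, mul_add]

variable {P q π} in
lemma EE_smul : ∀ (n h : ℕ) (s : S) (c : ℝ) (F : (Fin n → S × Ωr) → ℝ),
    EE P π q n h s (fun τ => c * F τ) = c * EE P π q n h s F := by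
  intro n
  induction n with
  | zero => intro h s c F; rfl
  | succ n ih =>
    intro h s c F
    rw [EE_succ, EE_succ, Finset.mul_sum]
    refine Finset.sum_congr rfl fun ω _ => ?_
    rw [Finset.mul_sum]
    refine Finset.sum_congr rfl fun s' _ => ?_
    rw [ih]
    ring

variable {P q π} in
lemma EE_mono (hPpos : ∀ h s a s', 0 ≤ P h s a s')
    (hqpos : ∀ h s a ω, 0 ≤ q h s a ω) :
    ∀ (n h : ℕ) (s : S) (F G : (Fin n → S × Ωr) → ℝ), (∀ τ, F τ ≤ G τ) →
    EE P π q n h s F ≤ EE P π q n h s G := by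
  intro n
  induction n with
  | zero => intro h s F G hFG; exact hFG _
  | succ n ih =>
    intro h s F G hFG
    rw [EE_succ, EE_succ]
    refine Finset.sum_le_sum fun ω _ => Finset.sum_le_sum fun s' _ => ?_
    exact mul_le_mul_of_nonneg_left (ih _ _ _ _ fun τ => hFG _)
      (mul_nonneg (hqpos _ _ _ _) (hPpos _ _ _ _))

variable {P q π} in
lemma EE_nonneg (hPpos : ∀ h s a s', 0 ≤ P h s a s')
    (hqpos : ∀ h s a ω, 0 ≤ q h s a ω)
    (hPsum : ∀ h s a, ∑ s' : S, P h s a s' = 1)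
    (hqsum : ∀ h s a, ∑ ω : Ωr, q h s a ω = 1)
    (n h : ℕ) (s : S) (F : (Fin n → S × Ωr) → ℝ) (hF : ∀ τ, 0 ≤ F τ) :
    0 ≤ EE P π q n h s F := by
  have := EE_mono (π := π) hPpos hqpos n h s (fun _ => 0) F (fun τ => hF τ)
  rwa [EE_const hPsum hqsum] at this

lemma qP_const (hPsum : ∀ h s a, ∑ s' : S, P h s a s' = 1)
    (hqsum : ∀ h s a, ∑ ω : Ωr, q h s a ω = 1) (h : ℕ) (s : S) (c : ℝ) :
    ∑ ω : Ωr, ∑ s' : S, q h s (π h s) ω * P h s (π h s) s' * c = c := by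
  have hω : ∀ ω : Ωr, ∑ s' : S, q h s (π h s) ω * P h s (π h s) s' * c =
      q h s (π h s) ω * c := by
    intro ω
    have : ∀ s' : S, q h s (π h s) ω * P h s (π h s) s' * c =
        (q h s (π h s) ω * c) * P h s (π h s) s' := fun s' => by ring
    rw [Finset.sum_congr rfl fun s' _ => this s', ← Finset.mul_sum, hPsum, mul_one]
  rw [Finset.sum_congr rfl fun ω _ => hω ω, ← Finset.sum_mul, hqsum, one_mul]

lemma qP_g (hPsum : ∀ h s a, ∑ s' : S, P h s a s' = 1)
    (hqsum : ∀ h s a, ∑ ω : Ωr, q h s a ω = 1) (h : ℕ) (s : S) (g : S → ℝ) :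
    ∑ ω : Ωr, ∑ s' : S, q h s (π h s) ω * P h s (π h s) s' * g s' =
      ∑ s' : S, P h s (π h s) s' * g s' := by
  have hω : ∀ ω : Ωr, ∑ s' : S, q h s (π h s) ω * P h s (π h s) s' * g s' =
      q h s (π h s) ω * ∑ s' : S, P h s (π h s) s' * g s' := by
    intro ω
    rw [Finset.mul_sum]
    exact Finset.sum_congr rfl fun s' _ => by ring
  rw [Finset.sum_congr rfl fun ω _ => hω ω, ← Finset.sum_mul, hqsum, one_mul]

variable (rv : ℕ → S → A → Ωr → ℝ) (rbar : ℕ → S → A → ℝ)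

/-- Second moment of the return, recursively. -/
noncomputable def Md : ℕ → ℕ → S → ℝ
  | 0, _, _ => 0
  | n+1, h, s => (∑ ω : Ωr, q h s (π h s) ω * rv h s (π h s) ω ^ 2)
      + 2 * rbar h s (π h s) * (∑ s' : S, P h s (π h s) s' * dVal P rbar π n (h+1) s')
      + ∑ s' : S, P h s (π h s) s' * Md n (h+1) s'

lemma Md_zero (h : ℕ) (s : S) : Md P π q rv rbar 0 h s = 0 := rfl

lemma Md_succ (n h : ℕ) (s : S) : Md P π q rv rbar (n+1) h s =
    (∑ ω : Ωr, q h s (π h s) ω * rv h s (π h s) ω ^ 2)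
      + 2 * rbar h s (π h s) * (∑ s' : S, P h s (π h s) s' * dVal P rbar π n (h+1) s')
      + ∑ s' : S, P h s (π h s) s' * Md P π q rv rbar n (h+1) s' := rfl

/-- One-step conditional variance contribution. -/
noncomputable def gfun (m h' : ℕ) (s' : S) : ℝ :=
  ((∑ s'' : S, P h' s' (π h' s') s'' * dVal P rbar π m (h'+1) s'' ^ 2)
    - (∑ s'' : S, P h' s' (π h' s') s'' * dVal P rbar π m (h'+1) s'') ^ 2)
  + ((∑ ω : Ωr, q h' s' (π h' s') ω * rv h' s' (π h' s') ω ^ 2) - rbar h' s' (π h' s') ^ 2)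

/-- Accumulated conditional variances. -/
noncomputable def Wd : ℕ → ℕ → S → ℝ
  | 0, _, _ => 0
  | n+1, h, s => gfun P π q rv rbar n h s + ∑ s' : S, P h s (π h s) s' * Wd n (h+1) s'

lemma Wd_zero (h : ℕ) (s : S) : Wd P π q rv rbar 0 h s = 0 := rfl

lemma Wd_succ (n h : ℕ) (s : S) : Wd P π q rv rbar (n+1) h s =
    gfun P π q rv rbar n h s + ∑ s' : S, P h s (π h s) s' * Wd P π q rv rbar n (h+1) s' := rfl

lemma dVal_zero (h : ℕ) (s : S) : dVal P rbar π 0 h s = 0 := rfl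

lemma dVal_succ (n h : ℕ) (s : S) : dVal P rbar π (n+1) h s =
    rbar h s (π h s) + ∑ s' : S, P h s (π h s) s' * dVal P rbar π n (h+1) s' := rfl

lemma Md_eq_dVal_sq_add_Wd : ∀ (n h : ℕ) (s : S),
    Md P π q rv rbar n h s = dVal P rbar π n h s ^ 2 + Wd P π q rv rbar n h s := by
  intro n
  induction n with
  | zero => intro h s; simp [Md_zero, Wd_zero, dVal_zero]
  | succ n ih =>
    intro h s
    rw [Md_succ, Wd_succ, dVal_succ]
    have hsplit : ∑ s' : S, P h s (π h s) s' * Md P π q rv rbar n (h+1) s' =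
        (∑ s' : S, P h s (π h s) s' * dVal P rbar π n (h+1) s' ^ 2) +
          ∑ s' : S, P h s (π h s) s' * Wd P π q rv rbar n (h+1) s' := by
      rw [← Finset.sum_add_distrib]
      exact Finset.sum_congr rfl fun s' _ => by rw [ih]; ring
    rw [hsplit, gfun]
    ring

lemma EE_ret (hPsum : ∀ h s a, ∑ s' : S, P h s a s' = 1)
    (hqsum : ∀ h s a, ∑ ω : Ωr, q h s a ω = 1)
    (hrbar : ∀ h s a, rbar h s a = ∑ ω : Ωr, q h s a ω * rv h s a ω) :
    ∀ (n h : ℕ) (s : S),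
    EE P π q n h s (fun τ => ∑ i : Fin n, rv (i.1 + h) (τ i).1 (π (i.1 + h) (τ i).1) (τ i).2)
      = dVal P rbar π n h s := by
  intro n
  induction n with
  | zero => intro h s; rw [EE_zero, dVal_zero]; simp
  | succ n ih =>
    intro h s
    rw [EE_succ]
    have hin : ∀ (ω : Ωr) (s' : S),
        EE P π q n (h+1) s' (fun τ => ∑ i : Fin (n+1),
          rv (i.1 + h) ((Fin.cons (s, ω) τ : Fin (n+1) → S × Ωr) i).1
            (π (i.1 + h) ((Fin.cons (s, ω) τ : Fin (n+1) → S × Ωr) i).1) ((Fin.cons (s, ω) τ : Fin (n+1) → S × Ωr) i).2) =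
        rv h s (π h s) ω + dVal P rbar π n (h+1) s' := by
      intro ω s'
      have e : (fun τ : Fin n → S × Ωr => ∑ i : Fin (n+1),
          rv (i.1 + h) ((Fin.cons (s, ω) τ : Fin (n+1) → S × Ωr) i).1
            (π (i.1 + h) ((Fin.cons (s, ω) τ : Fin (n+1) → S × Ωr) i).1) ((Fin.cons (s, ω) τ : Fin (n+1) → S × Ωr) i).2) =
          (fun τ => rv h s (π h s) ω +
            ∑ i : Fin n, rv (i.1 + (h+1)) (τ i).1 (π (i.1 + (h+1)) (τ i).1) (τ i).2) := by
        funext τ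
        rw [Fin.sum_univ_succ]
        simp only [Fin.cons_zero, Fin.cons_succ, Fin.val_zero, Fin.val_succ, Nat.zero_add]
        congr 1
        refine Finset.sum_congr rfl fun i _ => ?_
        have e1 : i.1 + 1 + h = i.1 + (h+1) := by omega
        rw [e1]
      rw [e, EE_add n (h+1) s' (fun _ => rv h s (π h s) ω) _, EE_const hPsum hqsum, ih]
    simp only [hin]
    have := qP_split P π q hPsum hqsum h s (fun ω => rv h s (π h s) ω) (fun _ => (0:ℝ))
      (fun _ => (0:ℝ)) (fun s' => dVal P rbar π n (h+1) s')
    simp only [zero_mul, mul_zero, add_zero, zero_add, Finset.sum_const_zero] at this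
    rw [this, dVal_succ, hrbar]

lemma EE_retsq (hPsum : ∀ h s a, ∑ s' : S, P h s a s' = 1)
    (hqsum : ∀ h s a, ∑ ω : Ωr, q h s a ω = 1)
    (hrbar : ∀ h s a, rbar h s a = ∑ ω : Ωr, q h s a ω * rv h s a ω) :
    ∀ (n h : ℕ) (s : S),
    EE P π q n h s (fun τ => (∑ i : Fin n,
        rv (i.1 + h) (τ i).1 (π (i.1 + h) (τ i).1) (τ i).2) ^ 2)
      = Md P π q rv rbar n h s := by
  intro n
  induction n with
  | zero => intro h s; rw [EE_zero, Md_zero]; simp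
  | succ n ih =>
    intro h s
    rw [EE_succ]
    have hin : ∀ (ω : Ωr) (s' : S),
        EE P π q n (h+1) s' (fun τ => (∑ i : Fin (n+1),
          rv (i.1 + h) ((Fin.cons (s, ω) τ : Fin (n+1) → S × Ωr) i).1
            (π (i.1 + h) ((Fin.cons (s, ω) τ : Fin (n+1) → S × Ωr) i).1) ((Fin.cons (s, ω) τ : Fin (n+1) → S × Ωr) i).2) ^ 2) =
        rv h s (π h s) ω ^ 2 +
          (2 * rv h s (π h s) ω) * dVal P rbar π n (h+1) s' +
          Md P π q rv rbar n (h+1) s' := by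
      intro ω s'
      have e : (fun τ : Fin n → S × Ωr => (∑ i : Fin (n+1),
          rv (i.1 + h) ((Fin.cons (s, ω) τ : Fin (n+1) → S × Ωr) i).1
            (π (i.1 + h) ((Fin.cons (s, ω) τ : Fin (n+1) → S × Ωr) i).1) ((Fin.cons (s, ω) τ : Fin (n+1) → S × Ωr) i).2) ^ 2) =
          (fun τ => rv h s (π h s) ω ^ 2 +
            ((2 * rv h s (π h s) ω) *
              (∑ i : Fin n, rv (i.1 + (h+1)) (τ i).1 (π (i.1 + (h+1)) (τ i).1) (τ i).2) +
             (∑ i : Fin n, rv (i.1 + (h+1)) (τ i).1 (π (i.1 + (h+1)) (τ i).1) (τ i).2) ^ 2)) := by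
        funext τ
        rw [Fin.sum_univ_succ]
        simp only [Fin.cons_zero, Fin.cons_succ, Fin.val_zero, Fin.val_succ, Nat.zero_add]
        have e2 : ∀ i : Fin n, rv (i.1 + 1 + h) (τ i).1 (π (i.1 + 1 + h) (τ i).1) (τ i).2 =
            rv (i.1 + (h+1)) (τ i).1 (π (i.1 + (h+1)) (τ i).1) (τ i).2 := by
          intro i
          have e1 : i.1 + 1 + h = i.1 + (h+1) := by omega
          rw [e1]
        rw [Finset.sum_congr rfl fun i _ => e2 i]
        ring
      rw [e, EE_add n (h+1) s' (fun _ => rv h s (π h s) ω ^ 2) _,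
        EE_add n (h+1) s' (fun τ => (2 * rv h s (π h s) ω) * _) _,
        EE_smul n (h+1) s' (2 * rv h s (π h s) ω), EE_const hPsum hqsum, ih,
        EE_ret P π q rv rbar hPsum hqsum hrbar]
      ring
    simp only [hin]
    have := qP_split P π q hPsum hqsum h s (fun ω => rv h s (π h s) ω ^ 2)
      (fun ω => 2 * rv h s (π h s) ω) (fun s' => dVal P rbar π n (h+1) s')
      (fun s' => Md P π q rv rbar n (h+1) s')
    rw [this, Md_succ]
    have h2 : ∑ ω : Ωr, q h s (π h s) ω * (2 * rv h s (π h s) ω) =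
        2 * ∑ ω : Ωr, q h s (π h s) ω * rv h s (π h s) ω := by
      rw [Finset.mul_sum]
      exact Finset.sum_congr rfl fun ω _ => by ring
    rw [h2, ← hrbar]

lemma EE_head (hPsum : ∀ h s a, ∑ s' : S, P h s a s' = 1)
    (hqsum : ∀ h s a, ∑ ω : Ωr, q h s a ω = 1)
    (n h : ℕ) (s : S) (φ : S → ℝ) :
    EE P π q (n+1) h s (fun τ => φ ((τ 0).1)) = φ s := by
  rw [EE_succ]
  have hin : ∀ (ω : Ωr) (s' : S),
      EE P π q n (h+1) s' (fun τ => φ (((Fin.cons (s, ω) τ : Fin (n+1) → S × Ωr) 0).1)) = φ s := by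
    intro ω s'
    have e : (fun τ : Fin n → S × Ωr => φ (((Fin.cons (s, ω) τ : Fin (n+1) → S × Ωr) 0).1)) = fun _ => φ s := by
      funext τ; rw [Fin.cons_zero]
    rw [e, EE_const hPsum hqsum]
  simp only [hin]
  exact qP_const P π q hPsum hqsum h s (φ s)

lemma Wd_eq (hPsum : ∀ h s a, ∑ s' : S, P h s a s' = 1)
    (hqsum : ∀ h s a, ∑ ω : Ωr, q h s a ω = 1) :
    ∀ (n h : ℕ) (s : S),
    Wd P π q rv rbar n h s = ∑ k : Fin n, EE P π q n h s
      (fun τ => gfun P π q rv rbar (n - (k.1 + 1)) (k.1 + h) ((τ k).1)) := by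
  intro n
  induction n with
  | zero => intro h s; rw [Wd_zero]; simp
  | succ n ih =>
    intro h s
    rw [Fin.sum_univ_succ]
    have h0 : EE P π q (n+1) h s
        (fun τ => gfun P π q rv rbar ((n+1) - ((0 : Fin (n+1)).1 + 1))
          ((0 : Fin (n+1)).1 + h) ((τ 0).1)) =
        gfun P π q rv rbar n h s := by
      have e1 : (n+1) - ((0 : Fin (n+1)).1 + 1) = n := by simp
      have e2 : (0 : Fin (n+1)).1 + h = h := by simp
      rw [e1, e2]
      exact EE_head P π q hPsum hqsum n h s (fun s' => gfun P π q rv rbar n h s')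
    rw [h0]
    have hsucc : ∀ j : Fin n, EE P π q (n+1) h s
        (fun τ => gfun P π q rv rbar ((n+1) - (j.succ.1 + 1)) (j.succ.1 + h) ((τ j.succ).1)) =
        ∑ ω : Ωr, ∑ s' : S, q h s (π h s) ω * P h s (π h s) s' *
          EE P π q n (h+1) s'
            (fun τ => gfun P π q rv rbar (n - (j.1 + 1)) (j.1 + (h+1)) ((τ j).1)) := by
      intro j
      have hv : (j.succ : ℕ) = j.1 + 1 := rfl
      have e1 : (n+1) - (j.succ.1 + 1) = n - (j.1 + 1) := by omega
      have e2 : j.succ.1 + h = j.1 + (h+1) := by omega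
      rw [e1, e2, EE_succ]
      simp only [Fin.cons_succ]
    rw [Finset.sum_congr rfl fun j _ => hsucc j]
    rw [Finset.sum_comm]
    have hswap : ∀ ω : Ωr, (∑ j : Fin n, ∑ s' : S, q h s (π h s) ω * P h s (π h s) s' *
        EE P π q n (h+1) s'
          (fun τ => gfun P π q rv rbar (n - (j.1 + 1)) (j.1 + (h+1)) ((τ j).1))) =
        ∑ s' : S, q h s (π h s) ω * P h s (π h s) s' * Wd P π q rv rbar n (h+1) s' := by
      intro ω
      rw [Finset.sum_comm]
      refine Finset.sum_congr rfl fun s' _ => ?_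
      rw [← Finset.mul_sum, ← ih (h+1) s']
    rw [Finset.sum_congr rfl fun ω _ => hswap ω]
    rw [qP_g P π q hPsum hqsum h s (fun s' => Wd P π q rv rbar n (h+1) s'), Wd_succ]

lemma trajProb_eq_TP (H : ℕ) (hH : 0 < H) (s₀ : S) :
    trajProb H hH P π q s₀ = TP P π q H 1 s₀ := by
  funext τ
  rw [trajProb, TP, dif_pos hH]

end Aux

/-- **law of total variance.** Fix a policy `π` in a finite-horizon MDP with
rewards in `[0,1]` and horizon `H`, starting from state `s₀`.  Then
`Σ_{h=1}^H E_{π,h}[Var_{P_h}(V^π_{h+1})(s_h,a_h)]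
  = Var_π(Σ_h r_h) − Σ_{h=1}^H E_{π,h}[Var(r_h | s_h,a_h)] ≤ Var_π(Σ_h r_h) ≤ H²`;
in particular `Σ_h E_{π,h}[Var_{P_h}(V^π_{h+1})] ≤ H²`.  Reward randomness at step `h`
given `(s_h, a_h)` is modelled by a noise variable `ω_h ∼ q_h(·|s_h,a_h)` with realized
reward `rv_h(s_h, a_h, ω_h) ∈ [0,1]` and mean `r_h(s_h,a_h) = Σ_ω q_h(ω|s_h,a_h) rv_h(s_h,a_h,ω)`. -/
theorem stmt19 [Fintype S] [Fintype A] [Fintype Ωr] [DecidableEq S]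
    (H : ℕ) (hH : 0 < H)
    (P : ℕ → S → A → S → ℝ) (π : ℕ → S → A)
    (q : ℕ → S → A → Ωr → ℝ) (rv : ℕ → S → A → Ωr → ℝ) (s₀ : S)
    (hPpos : ∀ h s a s', 0 ≤ P h s a s') (hPsum : ∀ h s a, ∑ s' : S, P h s a s' = 1)
    (hqpos : ∀ h s a ω, 0 ≤ q h s a ω) (hqsum : ∀ h s a, ∑ ω : Ωr, q h s a ω = 1)
    (hrv0 : ∀ h s a ω, 0 ≤ rv h s a ω) (hrv1 : ∀ h s a ω, rv h s a ω ≤ 1) :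
    -- mean reward
    let rbar : ℕ → S → A → ℝ := fun h s a => ∑ ω : Ωr, q h s a ω * rv h s a ω
    -- expectation over trajectories from s₀
    let texp : ((Fin H → S × Ωr) → ℝ) → ℝ :=
      fun F => ∑ τ : Fin H → S × Ωr, trajProb H hH P π q s₀ τ * F τ
    -- total (random) return of a trajectory
    let Ret : (Fin H → S × Ωr) → ℝ :=
      fun τ => ∑ i : Fin H, rv (i.1 + 1) (τ i).1 (π (i.1 + 1) (τ i).1) (τ i).2
    -- conditional variance of V^π_{h+1} at (s, a), for step h = i + 1
    let cvar : Fin H → S → ℝ := fun i s =>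
      (∑ s' : S, P (i.1 + 1) s (π (i.1 + 1) s) s' *
          (dVal P rbar π (H - (i.1 + 1)) (i.1 + 2) s') ^ 2) -
        (∑ s' : S, P (i.1 + 1) s (π (i.1 + 1) s) s' *
          dVal P rbar π (H - (i.1 + 1)) (i.1 + 2) s') ^ 2
    -- conditional variance of the reward at (s, a)
    let rvar : ℕ → S → A → ℝ := fun h s a =>
      (∑ ω : Ωr, q h s a ω * (rv h s a ω) ^ 2) - (rbar h s a) ^ 2
    ((∑ i : Fin H, texp fun τ => cvar i (τ i).1) =
        (texp (fun τ => (Ret τ) ^ 2) - (texp Ret) ^ 2) -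
          ∑ i : Fin H, texp fun τ => rvar (i.1 + 1) (τ i).1 (π (i.1 + 1) (τ i).1)) ∧
    ((∑ i : Fin H, texp fun τ => cvar i (τ i).1) ≤
        texp (fun τ => (Ret τ) ^ 2) - (texp Ret) ^ 2) ∧
    (texp (fun τ => (Ret τ) ^ 2) - (texp Ret) ^ 2 ≤ (H : ℝ) ^ 2) ∧
    ((∑ i : Fin H, texp fun τ => cvar i (τ i).1) ≤ (H : ℝ) ^ 2) := by
  intro rbar texp Ret cvar rvar
  have hrbar : ∀ h s a, rbar h s a = ∑ ω : Ωr, q h s a ω * rv h s a ω := fun _ _ _ => rfl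
  have htexp : ∀ F, texp F = EE P π q H 1 s₀ F := by
    intro F
    show (∑ τ : Fin H → S × Ωr, trajProb H hH P π q s₀ τ * F τ) = _
    simp only [trajProb_eq_TP P π q H hH s₀]
    exact TP_exp P π q hPsum H 1 s₀ F
  have hRet : texp Ret = dVal P rbar π H 1 s₀ := by
    rw [htexp]
    exact EE_ret P π q rv rbar hPsum hqsum hrbar H 1 s₀
  have hRet2 : texp (fun τ => (Ret τ) ^ 2) = Md P π q rv rbar H 1 s₀ := by
    rw [htexp]
    exact EE_retsq P π q rv rbar hPsum hqsum hrbar H 1 s₀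
  have hAB : ((∑ i : Fin H, texp fun τ => cvar i (τ i).1) +
      ∑ i : Fin H, texp fun τ => rvar (i.1 + 1) (τ i).1 (π (i.1 + 1) (τ i).1)) =
      Wd P π q rv rbar H 1 s₀ := by
    rw [← Finset.sum_add_distrib]
    rw [Wd_eq P π q rv rbar hPsum hqsum H 1 s₀]
    refine Finset.sum_congr rfl fun i _ => ?_
    rw [htexp, htexp, ← EE_add H 1 s₀]
    rfl
  have hMW : Md P π q rv rbar H 1 s₀ =
      dVal P rbar π H 1 s₀ ^ 2 + Wd P π q rv rbar H 1 s₀ :=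
    Md_eq_dVal_sq_add_Wd P π q rv rbar H 1 s₀
  have hBnn : 0 ≤ ∑ i : Fin H, texp fun τ => rvar (i.1 + 1) (τ i).1 (π (i.1 + 1) (τ i).1) := by
    refine Finset.sum_nonneg fun i _ => ?_
    rw [htexp]
    refine EE_nonneg hPpos hqpos hPsum hqsum H 1 s₀ _ fun τ => ?_
    show (0:ℝ) ≤ (∑ ω : Ωr, q (i.1+1) (τ i).1 (π (i.1+1) (τ i).1) ω *
        (rv (i.1+1) (τ i).1 (π (i.1+1) (τ i).1) ω) ^ 2) -
      (rbar (i.1+1) (τ i).1 (π (i.1+1) (τ i).1)) ^ 2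
    rw [sub_nonneg, hrbar]
    have := Finset.sum_sq_le_sum_mul_sum_of_sq_eq_mul (Finset.univ : Finset Ωr)
      (f := fun ω => q (i.1+1) (τ i).1 (π (i.1+1) (τ i).1) ω)
      (g := fun ω => q (i.1+1) (τ i).1 (π (i.1+1) (τ i).1) ω *
        rv (i.1+1) (τ i).1 (π (i.1+1) (τ i).1) ω ^ 2)
      (r := fun ω => q (i.1+1) (τ i).1 (π (i.1+1) (τ i).1) ω *
        rv (i.1+1) (τ i).1 (π (i.1+1) (τ i).1) ω)
      (fun ω _ => hqpos _ _ _ _)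
      (fun ω _ => mul_nonneg (hqpos _ _ _ _) (sq_nonneg _))
      (fun ω _ => by ring)
    calc (∑ ω : Ωr, q (i.1+1) (τ i).1 (π (i.1+1) (τ i).1) ω *
          rv (i.1+1) (τ i).1 (π (i.1+1) (τ i).1) ω) ^ 2
        ≤ (∑ ω : Ωr, q (i.1+1) (τ i).1 (π (i.1+1) (τ i).1) ω) *
          ∑ ω : Ωr, q (i.1+1) (τ i).1 (π (i.1+1) (τ i).1) ω *
            rv (i.1+1) (τ i).1 (π (i.1+1) (τ i).1) ω ^ 2 := this
      _ = _ := by rw [hqsum, one_mul]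
  have hRetBound : ∀ τ : Fin H → S × Ωr, Ret τ ^ 2 ≤ (H : ℝ) ^ 2 := by
    intro τ
    have h0 : (0:ℝ) ≤ Ret τ := Finset.sum_nonneg fun i _ => hrv0 _ _ _ _
    have h1 : Ret τ ≤ (H : ℝ) := by
      calc Ret τ ≤ ∑ _i : Fin H, (1:ℝ) := Finset.sum_le_sum fun i _ => hrv1 _ _ _ _
        _ = (H : ℝ) := by simp
    nlinarith [h0, h1]
  have hVarle : texp (fun τ => (Ret τ) ^ 2) - (texp Ret) ^ 2 ≤ (H : ℝ) ^ 2 := by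
    have h1 : texp (fun τ => (Ret τ) ^ 2) ≤ (H : ℝ) ^ 2 := by
      rw [htexp]
      calc EE P π q H 1 s₀ (fun τ => (Ret τ) ^ 2)
          ≤ EE P π q H 1 s₀ (fun _ => (H : ℝ) ^ 2) :=
            EE_mono hPpos hqpos H 1 s₀ _ _ hRetBound
        _ = (H : ℝ) ^ 2 := EE_const hPsum hqsum H 1 s₀ _
    nlinarith [sq_nonneg (texp Ret)]
  have hA : (∑ i : Fin H, texp fun τ => cvar i (τ i).1) =
      (texp (fun τ => (Ret τ) ^ 2) - (texp Ret) ^ 2) -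
        ∑ i : Fin H, texp fun τ => rvar (i.1 + 1) (τ i).1 (π (i.1 + 1) (τ i).1) := by
    rw [hRet, hRet2, hMW]
    linarith [hAB]
  refine ⟨hA, ?_, hVarle, ?_⟩
  · rw [hA]; linarith
  · rw [hA]; linarith
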